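/- arXiv:2403.15780 — 2 statements merged into one kernel-verified Lean document; each statement's English description precedes it below -/
import Mathlib

section
/- If X ~ Poisson(μ) and Y ~ Poisson(ν) are independent, then for every integer n, P(X - Y = n) = e^{-(μ+ν)} (μ/ν)^{n/2} I_n(2√(μν)), where I_n is the modified Bessel function of the first kind of integer order. -/
open scoped BigOperators
open MeasureTheory

/-- Modified Bessel function of the first kind of integer order, with the
convention that terms with a negative factorial argument vanish. -/
noncomputable def besselI (n : ℤ) (x : ℝ) : ℝ :=
  ∑' k : ℕ, if 0 ≤ n + (k : ℤ) then
    (x / 2) ^ ((n + 2 * (k : ℤ)).toNat) /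
      ((Nat.factorial k : ℝ) * (Nat.factorial ((n + (k : ℤ)).toNat) : ℝ))
  else 0

private theorem poisson_key (μ ν : ℝ) (hμ : 0 < μ) (hν : 0 < ν) (m k : ℕ) :
    (μ / ν) ^ (((m:ℝ) - k) / 2) * Real.sqrt (μ * ν) ^ (m + k) = μ ^ m * ν ^ k := by
  have hμν : 0 < μ * ν := mul_pos hμ hν
  have h1 : Real.sqrt (μ * ν) ^ (m + k) = (μ * ν) ^ ((((m:ℕ)+k:ℕ):ℝ) / 2) := by
    rw [Real.sqrt_eq_rpow, ← Real.rpow_natCast ((μ*ν) ^ ((1:ℝ)/2)) (m+k),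
      ← Real.rpow_mul hμν.le]
    ring_nf
  rw [h1, Real.div_rpow hμ.le hν.le, Real.mul_rpow hμ.le hν.le]
  rw [div_mul_eq_mul_div, ← mul_assoc, ← Real.rpow_add hμ,
    mul_div_assoc, ← Real.rpow_sub hν]
  push_cast
  rw [show ((m:ℝ) - k)/2 + ((m:ℝ)+k)/2 = (m:ℝ) from by ring,
    show ((m:ℝ)+ k)/2 - ((m:ℝ)-k)/2 = (k:ℝ) from by ring,
    Real.rpow_natCast, Real.rpow_natCast]

/-- pmf of the difference of two independent Poisson variables. -/
theorem poisson_difference_pmf {Ω : Type*} [MeasurableSpace Ω]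
    (P : Measure Ω) [IsProbabilityMeasure P]
    (X Y : Ω → ℕ) (hXm : Measurable X) (hYm : Measurable Y)
    (μ ν : ℝ) (hμ : 0 < μ) (hν : 0 < ν)
    (hindep : ProbabilityTheory.IndepFun X Y P)
    (hX : ∀ k : ℕ, P (X ⁻¹' {k}) =
      ENNReal.ofReal (Real.exp (-μ) * μ ^ k / (Nat.factorial k : ℝ)))
    (hY : ∀ k : ℕ, P (Y ⁻¹' {k}) =
      ENNReal.ofReal (Real.exp (-ν) * ν ^ k / (Nat.factorial k : ℝ))) :
    ∀ n : ℤ, P {ω | (X ω : ℤ) - (Y ω : ℤ) = n} =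
      ENNReal.ofReal (Real.exp (-(μ + ν)) * (μ / ν) ^ ((n : ℝ) / 2) *
        besselI n (2 * Real.sqrt (μ * ν))) := by
  intro n
  classical
  set S : ℕ → Set Ω := fun k => Y ⁻¹' {k} ∩ {ω | (X ω : ℤ) = n + k} with hSdef
  have hset : {ω | (X ω : ℤ) - (Y ω : ℤ) = n} = ⋃ k, S k := by
    ext ω
    simp only [Set.mem_setOf_eq, Set.mem_iUnion, hSdef, Set.mem_inter_iff,
      Set.mem_preimage, Set.mem_singleton_iff]
    constructor
    · intro h; exact ⟨Y ω, rfl, by omega⟩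
    · rintro ⟨k, h1, h2⟩; omega
  have hSm : ∀ k, MeasurableSet (S k) := fun k =>
    (hYm (MeasurableSet.singleton k)).inter
      (hXm (show MeasurableSet {m : ℕ | (m : ℤ) = n + k} from trivial))
  have hdisj : Pairwise (Function.onFun Disjoint S) := by
    intro i j hij
    refine Set.disjoint_left.2 ?_
    rintro ω ⟨h1, -⟩ ⟨h2, -⟩
    exact hij (h1.symm.trans h2)
  set g : ℕ → ℝ := fun k => if 0 ≤ n + (k : ℤ) then
      Real.exp (-μ) * μ ^ ((n + (k : ℤ)).toNat) / (Nat.factorial ((n + (k : ℤ)).toNat) : ℝ) *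
        (Real.exp (-ν) * ν ^ k / (Nat.factorial k : ℝ)) else 0 with hgdef
  have hPS : ∀ k, P (S k) = ENNReal.ofReal (g k) := by
    intro k
    by_cases h : 0 ≤ n + (k : ℤ)
    · have hT : {ω | (X ω : ℤ) = n + k} = X ⁻¹' {(n + (k : ℤ)).toNat} := by
        ext ω
        simp only [Set.mem_setOf_eq, Set.mem_preimage, Set.mem_singleton_iff]
        omega
      have : S k = X ⁻¹' {(n + (k : ℤ)).toNat} ∩ Y ⁻¹' {k} := by
        rw [hSdef]; simp only [hT]; exact Set.inter_comm _ _
      rw [this, hindep.measure_inter_preimage_eq_mul _ _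
        (MeasurableSet.singleton _) (MeasurableSet.singleton _), hX, hY,
        ← ENNReal.ofReal_mul (by positivity)]
      simp only [hgdef, if_pos h]
    · have hempty : S k = ∅ := by
        ext ω
        simp only [hSdef, Set.mem_inter_iff, Set.mem_preimage, Set.mem_singleton_iff,
          Set.mem_setOf_eq, Set.mem_empty_iff_false, iff_false, not_and]
        intro _ h2
        omega
      simp only [hempty, measure_empty, hgdef, if_neg h, ENNReal.ofReal_zero]
  have hg0 : ∀ k, 0 ≤ g k := by
    intro k
    simp only [hgdef]
    split
    · positivity
    · exact le_refl 0
  have hgs : Summable g := by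
    refine Summable.of_nonneg_of_le hg0 (fun k => ?_)
      ((Real.summable_pow_div_factorial ν).mul_left (Real.exp (-ν)))
    simp only [hgdef]
    split
    · rw [mul_div_assoc, mul_div_assoc]
      have h1 : Real.exp (-μ) * (μ ^ ((n + (k : ℤ)).toNat) /
          (Nat.factorial ((n + (k : ℤ)).toNat) : ℝ)) ≤ 1 := by
        rw [Real.exp_neg]
        rw [inv_mul_le_iff₀ (Real.exp_pos μ), mul_one]
        exact Real.pow_div_factorial_le_exp μ hμ.le _
      calc _ ≤ 1 * (Real.exp (-ν) * (ν ^ k / (Nat.factorial k : ℝ))) := by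
              refine mul_le_mul_of_nonneg_right h1 (by positivity)
        _ = Real.exp (-ν) * (ν ^ k / (Nat.factorial k : ℝ)) := one_mul _
    · positivity
  have hsum : ∑' k, g k = Real.exp (-(μ + ν)) * (μ / ν) ^ ((n : ℝ) / 2) *
      besselI n (2 * Real.sqrt (μ * ν)) := by
    rw [besselI, ← tsum_mul_left]
    refine tsum_congr fun k => ?_
    by_cases h : 0 ≤ n + (k : ℤ)
    · set m : ℕ := (n + (k : ℤ)).toNat with hmdef
      have hm : (m : ℤ) = n + k := Int.toNat_of_nonneg h
      have h2k : (n + 2 * (k : ℤ)).toNat = m + k := by omega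
      have hnr : (n : ℝ) = (m : ℝ) - k := by
        have : n = (m : ℤ) - k := by omega
        rw [this]; push_cast; ring
      have hfk : (Nat.factorial k : ℝ) ≠ 0 :=
        Nat.cast_ne_zero.2 (Nat.factorial_ne_zero k)
      have hfm : (Nat.factorial m : ℝ) ≠ 0 :=
        Nat.cast_ne_zero.2 (Nat.factorial_ne_zero m)
      have hexp : Real.exp (-(μ + ν)) = Real.exp (-μ) * Real.exp (-ν) := by
        rw [← Real.exp_add]; ring_nf
      have hsq : 2 * Real.sqrt (μ * ν) / 2 = Real.sqrt (μ * ν) := by ring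
      simp only [hgdef, if_pos h, ← hmdef, h2k, hsq, hexp, hnr]
      have hkey := poisson_key μ ν hμ hν m k
      symm
      calc Real.exp (-μ) * Real.exp (-ν) * (μ / ν) ^ (((m:ℝ) - k) / 2) *
            (Real.sqrt (μ * ν) ^ (m + k) / ((Nat.factorial k : ℝ) * (Nat.factorial m : ℝ)))
          = Real.exp (-μ) * Real.exp (-ν) *
            ((μ / ν) ^ (((m:ℝ) - k) / 2) * Real.sqrt (μ * ν) ^ (m + k)) /
            ((Nat.factorial k : ℝ) * (Nat.factorial m : ℝ)) := by ring
        _ = Real.exp (-μ) * Real.exp (-ν) * (μ ^ m * ν ^ k) /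
            ((Nat.factorial k : ℝ) * (Nat.factorial m : ℝ)) := by rw [hkey]
        _ = Real.exp (-μ) * μ ^ m / (Nat.factorial m : ℝ) *
            (Real.exp (-ν) * ν ^ k / (Nat.factorial k : ℝ)) := by
            field_simp
    · simp only [hgdef, if_neg h, mul_zero]
  calc P {ω | (X ω : ℤ) - (Y ω : ℤ) = n} = ∑' k, P (S k) := by
        rw [hset]; exact measure_iUnion hdisj hSm
    _ = ∑' k, ENNReal.ofReal (g k) := tsum_congr hPS
    _ = ENNReal.ofReal (∑' k, g k) := (ENNReal.ofReal_tsum_of_nonneg hg0 hgs).symm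
    _ = _ := by rw [hsum]
end

section
/- Under the factorization assumptions of the separable multi-agent MDP, the product policy π*(a|s) = ∏_i π_i*(a_i|s_i), where each π_i* is optimal for the i-th single-agent MDP, is an optimal policy for the joint multi-agent MDP. -/
open scoped BigOperators

/-- A stochastic kernel on finite spaces. -/
def IsKernel {S A : Type} [Fintype S] (P : S → A → S → ℝ) : Prop :=
  (∀ s a s', 0 ≤ P s a s') ∧ ∀ s a, ∑ s', P s a s' = 1

/-- A (stationary, stochastic) policy. -/
def IsPolicy {S A : Type} [Fintype A] (π : S → A → ℝ) : Prop :=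
  (∀ s a, 0 ≤ π s a) ∧ ∀ s, ∑ a, π s a = 1

/-- Push a state distribution forward one step under a policy. -/
noncomputable def push {S A : Type} [Fintype S] [Fintype A]
    (P : S → A → S → ℝ) (π : S → A → ℝ) (d : S → ℝ) : S → ℝ :=
  fun s' => ∑ s, ∑ a, d s * π s a * P s a s'

/-- Expected one-step reward under a state distribution and policy. -/
noncomputable def expReward {S A : Type} [Fintype S] [Fintype A]
    (P : S → A → S → ℝ) (R : S → A → S → ℝ) (π : S → A → ℝ) (d : S → ℝ) : ℝ :=
  ∑ s, ∑ a, ∑ s', d s * π s a * P s a s' * R s a s'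

/-- Value function of a policy: expected discounted return from state s. -/
noncomputable def policyValue {S A : Type} [Fintype S] [Fintype A] [DecidableEq S]
    (P : S → A → S → ℝ) (R : S → A → S → ℝ) (γ : ℝ) (π : S → A → ℝ) (s : S) : ℝ :=
  ∑' k : ℕ, γ ^ k *
    expReward P R π ((push P π)^[k] (fun s' => if s' = s then 1 else 0))

/-- Optimal value function. -/
noncomputable def optValue {S A : Type} [Fintype S] [Fintype A] [DecidableEq S]
    (P : S → A → S → ℝ) (R : S → A → S → ℝ) (γ : ℝ) (s : S) : ℝ :=
  ⨆ π : {π : S → A → ℝ // IsPolicy π}, policyValue P R γ π.1 s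

/-!
The value of a policy `π` is the fixed point of its Bellman operator `V ↦ r_π + γ P_π V`
(write the value as `∑ₖ γᵏ P_πᵏ r_π`, pulling the reward back along the chain instead of pushing
the initial distribution forward). This operator is a monotone `γ`-contraction for the sup norm,
so every supersolution lies above the value and every subsolution below it.

An optimal value dominates all its action values: if some action `a` did better at `s`, the
policy playing `a` at `s` would beat it there. Under the product kernel and additive reward, both
the action values and the Bellman operator of the product policy split into sums over the agents.
Hence `∑ᵢ Vᵢ(sᵢ)` is the value of the product policy and dominates every joint action value, so it
is a supersolution for, and bounds the value of, any joint policy.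
-/

section Contracting

variable {α : Type*} [MetricSpace α] [Nonempty α] [CompleteSpace α] [Preorder α]
  {K : NNReal} {f : α → α}

theorem ContractingWith.isFixedPt_le_of_map_le [ClosedIicTopology α] (hf : ContractingWith K f)
    (hmono : Monotone f) {x y : α} (hy : Function.IsFixedPt f y) (hx : f x ≤ x) : y ≤ x := by
  rw [hf.fixedPoint_unique hy]
  exact le_of_tendsto' (hf.tendsto_iterate_fixedPoint x) fun n =>
    hmono.antitone_iterate_of_map_le hx (Nat.zero_le n)

theorem ContractingWith.le_isFixedPt_of_le_map [ClosedIciTopology α] (hf : ContractingWith K f)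
    (hmono : Monotone f) {x y : α} (hy : Function.IsFixedPt f y) (hx : x ≤ f x) : x ≤ y := by
  rw [hf.fixedPoint_unique hy]
  exact ge_of_tendsto' (hf.tendsto_iterate_fixedPoint x) fun n =>
    hmono.monotone_iterate_of_le_map hx (Nat.zero_le n)

end Contracting

section MDP

variable {S A : Type} [Fintype S] [Fintype A]

@[simps]
def transitionOp (P : S → A → S → ℝ) (π : S → A → ℝ) : (S → ℝ) →ₗ[ℝ] (S → ℝ) where
  toFun f s := ∑ a, π s a * ∑ s', P s a s' * f s'
  map_add' _ _ := by
    ext s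
    simp only [Pi.add_apply, mul_add, Finset.sum_add_distrib]
  map_smul' c f := by
    ext s
    simp only [Pi.smul_apply, smul_eq_mul, RingHom.id_apply, Finset.mul_sum]
    exact Finset.sum_congr rfl fun a _ => Finset.sum_congr rfl fun s' _ => by ring

def meanReward (P R : S → A → S → ℝ) (π : S → A → ℝ) (s : S) : ℝ :=
  ∑ a, π s a * ∑ s', P s a s' * R s a s'

def actionValue (P R : S → A → S → ℝ) (γ : ℝ) (V : S → ℝ) (s : S) (a : A) : ℝ :=
  ∑ s', P s a s' * (R s a s' + γ * V s')

def bellmanOp (P R : S → A → S → ℝ) (γ : ℝ) (π : S → A → ℝ) (V : S → ℝ) : S → ℝ :=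
  meanReward P R π + γ • transitionOp P π V

theorem sum_push_mul (P : S → A → S → ℝ) (π : S → A → ℝ) (d f : S → ℝ) :
    ∑ s', push P π d s' * f s' = ∑ s, d s * transitionOp P π f s := by
  simp only [push, transitionOp_apply, Finset.sum_mul, Finset.mul_sum]
  rw [Finset.sum_comm]
  refine Finset.sum_congr rfl fun s _ => ?_
  rw [Finset.sum_comm]
  exact Finset.sum_congr rfl fun a _ => Finset.sum_congr rfl fun s' _ => by ring

theorem expReward_eq_sum_mul_meanReward (P R : S → A → S → ℝ) (π : S → A → ℝ) (d : S → ℝ) :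
    expReward P R π d = ∑ s, d s * meanReward P R π s := by
  simp only [expReward, meanReward, Finset.mul_sum]
  exact Finset.sum_congr rfl fun s _ => Finset.sum_congr rfl fun a _ =>
    Finset.sum_congr rfl fun s' _ => by ring

theorem expReward_iterate_push (P R : S → A → S → ℝ) (π : S → A → ℝ) (k : ℕ) (d : S → ℝ) :
    expReward P R π ((push P π)^[k] d) =
      ∑ s, d s * (transitionOp P π)^[k] (meanReward P R π) s := by
  induction k generalizing d with
  | zero => exact expReward_eq_sum_mul_meanReward P R π d
  | succ k ih =>
    rw [Function.iterate_succ_apply, ih, sum_push_mul, Function.iterate_succ_apply']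

theorem transitionOp_mono {P : S → A → S → ℝ} {π : S → A → ℝ} (hP : IsKernel P)
    (hπ : IsPolicy π) : Monotone (transitionOp P π) := fun _ _ hfg s =>
  Finset.sum_le_sum fun a _ => mul_le_mul_of_nonneg_left
    (Finset.sum_le_sum fun s' _ => mul_le_mul_of_nonneg_left (hfg s') (hP.1 s a s')) (hπ.1 s a)

theorem transitionOp_const {P : S → A → S → ℝ} {π : S → A → ℝ} (hP : IsKernel P)
    (hπ : IsPolicy π) (c : ℝ) : transitionOp P π (fun _ => c) = fun _ => c := by
  ext s
  simp only [transitionOp_apply, ← Finset.sum_mul, hP.2, one_mul, hπ.2]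

theorem norm_transitionOp_le {P : S → A → S → ℝ} {π : S → A → ℝ} (hP : IsKernel P)
    (hπ : IsPolicy π) (f : S → ℝ) : ‖transitionOp P π f‖ ≤ ‖f‖ := by
  have hf : ∀ s, |f s| ≤ ‖f‖ := fun s => norm_le_pi_norm f s
  have lower := transitionOp_mono hP hπ
    (show (fun _ => -‖f‖) ≤ f from fun s => neg_le_of_abs_le (hf s))
  have upper := transitionOp_mono hP hπ
    (show f ≤ fun _ => ‖f‖ from fun s => le_of_abs_le (hf s))
  rw [transitionOp_const hP hπ] at lower upper
  exact (pi_norm_le_iff_of_nonneg (norm_nonneg f)).2 fun s => abs_le.2 ⟨lower s, upper s⟩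


theorem norm_iterate_transitionOp_le {P : S → A → S → ℝ} {π : S → A → ℝ} (hP : IsKernel P)
    (hπ : IsPolicy π) (f : S → ℝ) (k : ℕ) : ‖(transitionOp P π)^[k] f‖ ≤ ‖f‖ := by
  induction k with
  | zero => rfl
  | succ k ih =>
    rw [Function.iterate_succ_apply']
    exact (norm_transitionOp_le hP hπ _).trans ih

theorem summable_discounted_iterate_transitionOp {P : S → A → S → ℝ} {π : S → A → ℝ}
    (hP : IsKernel P) (hπ : IsPolicy π) {γ : ℝ} (hγ0 : 0 ≤ γ) (hγ1 : γ < 1) (f : S → ℝ) :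
    Summable fun k : ℕ => γ ^ k • (transitionOp P π)^[k] f := by
  refine .of_norm_bounded ((summable_geometric_of_lt_one hγ0 hγ1).mul_right ‖f‖) fun k => ?_
  rw [norm_smul, norm_pow, Real.norm_of_nonneg hγ0]
  exact mul_le_mul_of_nonneg_left (norm_iterate_transitionOp_le hP hπ f k) (by positivity)

theorem bellmanOp_mono {P R : S → A → S → ℝ} {π : S → A → ℝ} (hP : IsKernel P)
    (hπ : IsPolicy π) {γ : ℝ} (hγ0 : 0 ≤ γ) : Monotone (bellmanOp P R γ π) :=
  fun _ _ hVW => by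
    unfold bellmanOp
    gcongr
    exact transitionOp_mono hP hπ hVW

theorem contractingWith_bellmanOp {P R : S → A → S → ℝ} {π : S → A → ℝ} (hP : IsKernel P)
    (hπ : IsPolicy π) {γ : ℝ} (hγ0 : 0 ≤ γ) (hγ1 : γ < 1) :
    ContractingWith ⟨γ, hγ0⟩ (bellmanOp P R γ π) := by
  refine ⟨hγ1, LipschitzWith.of_dist_le_mul fun V W => ?_⟩
  rw [dist_eq_norm, dist_eq_norm, bellmanOp, bellmanOp, add_sub_add_left_eq_sub, ← smul_sub,
    ← map_sub, norm_smul, Real.norm_of_nonneg hγ0]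
  exact mul_le_mul_of_nonneg_left (norm_transitionOp_le hP hπ _) hγ0

variable [DecidableEq S]

theorem policyValue_eq_tsum {P R : S → A → S → ℝ} {π : S → A → ℝ} (hP : IsKernel P)
    (hπ : IsPolicy π) {γ : ℝ} (hγ0 : 0 ≤ γ) (hγ1 : γ < 1) :
    policyValue P R γ π = ∑' k : ℕ, γ ^ k • (transitionOp P π)^[k] (meanReward P R π) := by
  ext s
  rw [tsum_apply (summable_discounted_iterate_transitionOp hP hπ hγ0 hγ1 _)]
  simp only [policyValue, expReward_iterate_push, ite_mul, one_mul, zero_mul,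
    Fintype.sum_ite_eq', Pi.smul_apply, smul_eq_mul]

theorem bellmanOp_policyValue {P R : S → A → S → ℝ} {π : S → A → ℝ} (hP : IsKernel P)
    (hπ : IsPolicy π) {γ : ℝ} (hγ0 : 0 ≤ γ) (hγ1 : γ < 1) :
    bellmanOp P R γ π (policyValue P R γ π) = policyValue P R γ π := by
  have hsum := summable_discounted_iterate_transitionOp hP hπ hγ0 hγ1 (meanReward P R π)
  have hmap := (LinearMap.toContinuousLinearMap (transitionOp P π)).map_tsum hsum
  rw [LinearMap.coe_toContinuousLinearMap'] at hmap
  rw [policyValue_eq_tsum hP hπ hγ0 hγ1, bellmanOp, hmap, ← tsum_const_smul'']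
  conv_rhs => rw [hsum.tsum_eq_zero_add]
  congr 1
  · simp
  · congr 1
    ext1 k
    rw [map_smul, smul_smul, ← pow_succ', Function.iterate_succ_apply']

theorem policyValue_le_of_bellmanOp_le {P R : S → A → S → ℝ} {π : S → A → ℝ} (hP : IsKernel P)
    (hπ : IsPolicy π) {γ : ℝ} (hγ0 : 0 ≤ γ) (hγ1 : γ < 1) {V : S → ℝ}
    (hV : bellmanOp P R γ π V ≤ V) : policyValue P R γ π ≤ V :=
  (contractingWith_bellmanOp hP hπ hγ0 hγ1).isFixedPt_le_of_map_le (bellmanOp_mono hP hπ hγ0)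
    (bellmanOp_policyValue hP hπ hγ0 hγ1) hV

theorem le_policyValue_of_le_bellmanOp {P R : S → A → S → ℝ} {π : S → A → ℝ} (hP : IsKernel P)
    (hπ : IsPolicy π) {γ : ℝ} (hγ0 : 0 ≤ γ) (hγ1 : γ < 1) {V : S → ℝ}
    (hV : V ≤ bellmanOp P R γ π V) : V ≤ policyValue P R γ π :=
  (contractingWith_bellmanOp hP hπ hγ0 hγ1).le_isFixedPt_of_le_map (bellmanOp_mono hP hπ hγ0)
    (bellmanOp_policyValue hP hπ hγ0 hγ1) hV

theorem eq_policyValue_of_bellmanOp_eq {P R : S → A → S → ℝ} {π : S → A → ℝ} (hP : IsKernel P)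
    (hπ : IsPolicy π) {γ : ℝ} (hγ0 : 0 ≤ γ) (hγ1 : γ < 1) {V : S → ℝ}
    (hV : bellmanOp P R γ π V = V) : V = policyValue P R γ π :=
  (contractingWith_bellmanOp hP hπ hγ0 hγ1).fixedPoint_unique' hV
    (bellmanOp_policyValue hP hπ hγ0 hγ1)

end MDP

section Optimality

theorem IsPolicy.update {S A : Type} [Fintype A] [DecidableEq S] {π : S → A → ℝ}
    (hπ : IsPolicy π) (s : S) {p : A → ℝ} (hp0 : ∀ a, 0 ≤ p a) (hp1 : ∑ a, p a = 1) : IsPolicy (Function.update π s p) := by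
  constructor
  · intro t a
    rcases eq_or_ne t s with rfl | ht
    · simpa using hp0 a
    · simpa [ht] using hπ.1 t a
  · intro t
    rcases eq_or_ne t s with rfl | ht
    · simpa using hp1
    · simpa [ht] using hπ.2 t

variable {S A : Type} [Fintype S] [Fintype A]

theorem bellmanOp_apply (P R : S → A → S → ℝ) (γ : ℝ) (π : S → A → ℝ) (V : S → ℝ) (s : S) :
    bellmanOp P R γ π V s = ∑ a, π s a * actionValue P R γ V s a := by
  simp only [bellmanOp, actionValue, meanReward, Pi.add_apply, Pi.smul_apply, smul_eq_mul,
    transitionOp_apply, mul_add, Finset.sum_add_distrib, Finset.mul_sum]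
  congr 1
  exact Finset.sum_congr rfl fun a _ => Finset.sum_congr rfl fun s' _ => by ring

theorem bellmanOp_le_of_actionValue_le {P R : S → A → S → ℝ} {π : S → A → ℝ} (hπ : IsPolicy π)
    {γ : ℝ} {V : S → ℝ} {s : S} {c : ℝ} (h : ∀ a, actionValue P R γ V s a ≤ c) :
    bellmanOp P R γ π V s ≤ c :=
  calc bellmanOp P R γ π V s ≤ ∑ a, π s a * c := by
        rw [bellmanOp_apply]
        exact Finset.sum_le_sum fun a _ => mul_le_mul_of_nonneg_left (h a) (hπ.1 s a)
    _ = c := by rw [← Finset.sum_mul, hπ.2, one_mul]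

variable [DecidableEq S]

theorem actionValue_le_policyValue_of_optimal {P R : S → A → S → ℝ} {π : S → A → ℝ}
    (hP : IsKernel P) (hπ : IsPolicy π) {γ : ℝ} (hγ0 : 0 ≤ γ) (hγ1 : γ < 1)
    (hopt : ∀ π', IsPolicy π' → policyValue P R γ π' ≤ policyValue P R γ π) (s : S) (a : A) :
    actionValue P R γ (policyValue P R γ π) s a ≤ policyValue P R γ π s := by
  classical
  set V := policyValue P R γ π
  by_contra! hlt
  let π' := Function.update π s (Pi.single a 1)
  let V' := Function.update V s (actionValue P R γ V s a)
  -- `V'` is a subsolution for `π'`, yet `V' s > V s ≥ policyValue π' s`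
  have hπ' : IsPolicy π' := hπ.update s (fun b => by by_cases hb : b = a <;> simp [hb])
    (by simp [Finset.sum_pi_single'])
  have hVV' : V ≤ V' := by
    intro t
    rcases eq_or_ne t s with rfl | ht
    · simpa [V'] using hlt.le
    · simp [V', ht]
  have hV' : V' ≤ bellmanOp P R γ π' V := by
    intro t
    rcases eq_or_ne t s with rfl | ht
    · simp [V', π', bellmanOp_apply, Pi.single_apply]
    · refine le_of_eq ?_
      calc V' t = V t := Function.update_of_ne ht _ _
        _ = bellmanOp P R γ π V t := (congrFun (bellmanOp_policyValue hP hπ hγ0 hγ1) t).symm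
        _ = bellmanOp P R γ π' V t := by simp only [bellmanOp_apply, π', Function.update_of_ne ht]
  have hV's : V' s ≤ policyValue P R γ π' s :=
    le_policyValue_of_le_bellmanOp hP hπ' hγ0 hγ1 (hV'.trans (bellmanOp_mono hP hπ' hγ0 hVV')) s
  have hV's_eq : V' s = actionValue P R γ V s a := Function.update_self _ _ _
  linarith [hopt π' hπ' s]

end Optimality

section Product

variable {ι : Type} [Fintype ι] [DecidableEq ι]

theorem sum_prod_eq_one {R : Type*} [CommSemiring R] {T : ι → Type*} [∀ i, Fintype (T i)]
    {p : ∀ i, T i → R} (hp : ∀ i, ∑ t, p i t = 1) : ∑ x : ∀ i, T i, ∏ i, p i (x i) = 1 := by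
  rw [← Fintype.prod_sum]
  exact Finset.prod_eq_one fun i _ => hp i

theorem sum_prod_mul_apply {R : Type*} [CommSemiring R] {T : ι → Type*} [∀ i, Fintype (T i)]
    {p : ∀ i, T i → R} (hp : ∀ i, ∑ t, p i t = 1) (i : ι) (f : T i → R) :
    ∑ x : ∀ j, T j, (∏ j, p j (x j)) * f (x i) = ∑ t, p i t * f t := by
  -- reweight the `i`-th factor by `f` and use `∏ ∑ = ∑ ∏`
  let q : ∀ j, T j → R := Function.update p i fun t => p i t * f t
  have hq : ∀ j, j ≠ i → q j = p j := fun j hj => Function.update_of_ne hj _ _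
  have hprod : ∀ x : ∀ j, T j, ∏ j, q j (x j) = (∏ j, p j (x j)) * f (x i) := by
    intro x
    rw [← Finset.mul_prod_erase _ _ (Finset.mem_univ i),
      ← Finset.mul_prod_erase _ (fun j => p j (x j)) (Finset.mem_univ i),
      Finset.prod_congr rfl fun j hj => by rw [hq j (Finset.ne_of_mem_erase hj)]]
    simp only [q, Function.update_self]
    ring
  calc ∑ x : ∀ j, T j, (∏ j, p j (x j)) * f (x i) = ∏ j, ∑ t, q j t := by
        simp only [← hprod, Fintype.prod_sum]
    _ = ∑ t, p i t * f t := by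
        rw [← Finset.mul_prod_erase _ _ (Finset.mem_univ i),
          Finset.prod_eq_one fun j hj => by rw [hq j (Finset.ne_of_mem_erase hj), hp j]]
        simp only [q, Function.update_self, mul_one]

theorem sum_prod_mul_sum {R : Type*} [CommSemiring R] {T : ι → Type*} [∀ i, Fintype (T i)]
    {p : ∀ i, T i → R} (hp : ∀ i, ∑ t, p i t = 1) (f : ∀ i, T i → R) :
    ∑ x : ∀ j, T j, (∏ j, p j (x j)) * ∑ i, f i (x i) = ∑ i, ∑ t, p i t * f i t := by
  simp only [Finset.mul_sum]
  rw [Finset.sum_comm]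
  exact Finset.sum_congr rfl fun i _ => sum_prod_mul_apply hp i (f i)

variable {S A : ι → Type}

theorem isPolicy_pi [∀ i, Fintype (A i)] {π : ∀ i, S i → A i → ℝ} (hπ : ∀ i, IsPolicy (π i)) :
    IsPolicy fun (s : ∀ i, S i) (a : ∀ i, A i) => ∏ i, π i (s i) (a i) :=
  ⟨fun _ _ => Finset.prod_nonneg fun i _ => (hπ i).1 _ _,
    fun _ => sum_prod_eq_one fun i => (hπ i).2 _⟩

variable [∀ i, Fintype (S i)]

theorem isKernel_pi {P : ∀ i, S i → A i → S i → ℝ} (hP : ∀ i, IsKernel (P i)) :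
    IsKernel fun (s : ∀ i, S i) (a : ∀ i, A i) s' => ∏ i, P i (s i) (a i) (s' i) :=
  ⟨fun _ _ _ => Finset.prod_nonneg fun i _ => (hP i).1 _ _ _,
    fun _ _ => sum_prod_eq_one fun i => (hP i).2 _ _⟩

theorem actionValue_pi {P R : ∀ i, S i → A i → S i → ℝ} (hP : ∀ i, IsKernel (P i)) (γ : ℝ)
    (V : ∀ i, S i → ℝ) (s : ∀ i, S i) (a : ∀ i, A i) :
    actionValue (fun (s : ∀ i, S i) (a : ∀ i, A i) s' => ∏ i, P i (s i) (a i) (s' i))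
        (fun s a s' => ∑ i, R i (s i) (a i) (s' i)) γ (fun s => ∑ i, V i (s i)) s a =
      ∑ i, actionValue (P i) (R i) γ (V i) (s i) (a i) := by
  simp only [actionValue, ← sum_prod_mul_sum fun i => (hP i).2 (s i) (a i), Finset.mul_sum,
    Finset.sum_add_distrib]

variable [∀ i, Fintype (A i)]

theorem bellmanOp_pi {P R : ∀ i, S i → A i → S i → ℝ} (hP : ∀ i, IsKernel (P i)) (γ : ℝ)
    {π : ∀ i, S i → A i → ℝ} (hπ : ∀ i, IsPolicy (π i)) (V : ∀ i, S i → ℝ) :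
    bellmanOp (fun (s : ∀ i, S i) (a : ∀ i, A i) s' => ∏ i, P i (s i) (a i) (s' i))
        (fun s a s' => ∑ i, R i (s i) (a i) (s' i)) γ (fun s a => ∏ i, π i (s i) (a i))
        (fun s => ∑ i, V i (s i)) =
      fun s => ∑ i, bellmanOp (P i) (R i) γ (π i) (V i) (s i) := by
  ext s
  simp only [bellmanOp_apply, actionValue_pi hP]
  exact sum_prod_mul_sum (fun i => (hπ i).2 (s i)) _

theorem policyValue_pi [∀ i, DecidableEq (S i)] {P R : ∀ i, S i → A i → S i → ℝ}
    (hP : ∀ i, IsKernel (P i)) {γ : ℝ} (hγ0 : 0 ≤ γ) (hγ1 : γ < 1)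
    {π : ∀ i, S i → A i → ℝ} (hπ : ∀ i, IsPolicy (π i)) :
    policyValue (fun (s : ∀ i, S i) (a : ∀ i, A i) s' => ∏ i, P i (s i) (a i) (s' i))
        (fun s a s' => ∑ i, R i (s i) (a i) (s' i)) γ (fun s a => ∏ i, π i (s i) (a i)) =
      fun s => ∑ i, policyValue (P i) (R i) γ (π i) (s i) := by
  refine (eq_policyValue_of_bellmanOp_eq (isKernel_pi hP) (isPolicy_pi hπ) hγ0 hγ1 ?_).symm
  simp only [bellmanOp_pi hP γ hπ, bellmanOp_policyValue (hP _) (hπ _) hγ0 hγ1]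

end Product

/-- In a separable multi-agent MDP, the product of per-agent optimal policies
is an optimal joint policy. -/
theorem separable_product_policy_optimal {N : ℕ} (S A : Fin N → Type)
    [∀ i, Fintype (S i)] [∀ i, Fintype (A i)] [∀ i, DecidableEq (S i)]
    (P : ∀ i, S i → A i → S i → ℝ) (R : ∀ i, S i → A i → S i → ℝ)
    (hP : ∀ i, IsKernel (P i)) (γ : ℝ) (hγ0 : 0 ≤ γ) (hγ1 : γ < 1)
    (π : ∀ i, S i → A i → ℝ) (hπ : ∀ i, IsPolicy (π i))
    (hopt : ∀ i, ∀ π' : S i → A i → ℝ, IsPolicy π' → ∀ s,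
      policyValue (P i) (R i) γ π' s ≤ policyValue (P i) (R i) γ (π i) s) :
    ∀ π' : (∀ i, S i) → (∀ i, A i) → ℝ, IsPolicy π' → ∀ s : ∀ i, S i,
      policyValue (S := ∀ i, S i) (A := ∀ i, A i)
          (fun s a s' => ∏ i, P i (s i) (a i) (s' i))
          (fun s a s' => ∑ i, R i (s i) (a i) (s' i)) γ π' s ≤
        policyValue (S := ∀ i, S i) (A := ∀ i, A i)
          (fun s a s' => ∏ i, P i (s i) (a i) (s' i))
          (fun s a s' => ∑ i, R i (s i) (a i) (s' i)) γ
          (fun s a => ∏ i, π i (s i) (a i)) s := by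
  intro π' hπ' s
  rw [policyValue_pi hP hγ0 hγ1 hπ]
  refine policyValue_le_of_bellmanOp_le (isKernel_pi hP) hπ' hγ0 hγ1
    (V := fun t => ∑ i, policyValue (P i) (R i) γ (π i) (t i)) (fun t => ?_) s
  refine bellmanOp_le_of_actionValue_le hπ' fun a => ?_
  rw [actionValue_pi hP]
  exact Finset.sum_le_sum fun i _ =>
    actionValue_le_policyValue_of_optimal (hP i) (hπ i) hγ0 hγ1 (hopt i) (t i) (a i)
end
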